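/- Let H be the family obtained by composing the λ-fold concatenated polynomial hash (each component an ⌈μ/w⌉·2^{-w}-AU₂ family as above) with a Toeplitz XU₂ family mapping {0,1}^{λ(w+1)} → {0,1}^τ, followed by one-time-pad encryption with an independent uniform τ-bit key. Then H is an ε-ASU₂ family with ε = 2^{-τ} + ⌈μ/w⌉^λ · 2^{-λw}. The non-OTP key has length 2λw + λ + τ − 1 bits, namely λw bits for the polynomial keys plus λ(w+1)+τ−1 bits for the Toeplitz key, while the per-message fresh key (OTP key) has length τ bits. -/

import Mathlib

open Finset

/-- Integer value of a bit string (little-endian). -/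
def natOfBits (bs : List Bool) : ℕ :=
  Nat.ofDigits 2 (bs.map fun b => if b then 1 else 0)

/-- Pad a message with a `1` followed by zeros up to length `l·w`, `l = (μ+w)/w = ⌈(μ+1)/w⌉`. -/
def padMsg (μ w : ℕ) (m : List Bool) : List Bool :=
  m ++ [true] ++ List.replicate ((μ + w) / w * w - m.length - 1) false

/-- The `i`-th `w`-bit chunk of a bit string, as a natural number. -/
def chunkAt (w : ℕ) (bs : List Bool) (i : ℕ) : ℕ :=
  natOfBits ((bs.drop (i * w)).take w)

/-- The `w`-bit little-endian representation of a natural number. -/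
def bitsOf (w n : ℕ) : Fin w → ZMod 2 := fun i => ((n / 2 ^ (i : ℕ)) % 2 : ℕ)

/-- The padded polynomial hash `{0,1}^{≤μ} → ZMod p` with key `k ∈ {0,1}^w`. -/
def polyHash (μ w p : ℕ) (k : Fin (2 ^ w)) (m : List Bool) : ZMod p :=
  ∑ i : Fin ((μ + w) / w),
    (chunkAt w (padMsg μ w m) i : ZMod p) * ((k : ℕ) : ZMod p) ^ (i : ℕ)

/-- Concatenation of `lam` independent polynomial hashes, each output written
as `w+1` bits, giving a string in `{0,1}^{lam(w+1)}`. -/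
def concatPoly (μ w p lam : ℕ) [NeZero p] (ks : Fin lam → Fin (2 ^ w)) (m : List Bool) :
    Fin (lam * (w + 1)) → ZMod 2 :=
  fun idx =>
    bitsOf (w + 1)
      (ZMod.val (polyHash μ w p (ks ⟨(idx : ℕ) / (w + 1), by have := idx.isLt; exact Nat.div_lt_of_lt_mul (Nat.mul_comm lam (w + 1) ▸ this)⟩) m))
      ⟨(idx : ℕ) % (w + 1), Nat.mod_lt _ (Nat.succ_pos w)⟩

/-- The β×α Toeplitz hash over GF(2). -/
def toeplitzHash (α β : ℕ) (k : Fin (α + β - 1) → ZMod 2) (x : Fin α → ZMod 2) :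
    Fin β → ZMod 2 :=
  fun i => ∑ j : Fin α,
    k ⟨β + (j : ℕ) - (i : ℕ) - 1, by
        have hj := j.isLt; have hi := i.isLt; omega⟩ * x j

lemma natOfBits_nil : natOfBits [] = 0 := rfl

lemma natOfBits_cons (b : Bool) (bs : List Bool) :
    natOfBits (b :: bs) = (if b then 1 else 0) + 2 * natOfBits bs := by
  simp [natOfBits, Nat.ofDigits_cons]

lemma natOfBits_lt (bs : List Bool) : natOfBits bs < 2 ^ bs.length := by
  induction bs with
  | nil => simp [natOfBits_nil]
  | cons b bs ih =>
    rw [natOfBits_cons]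
    simp only [List.length_cons, pow_succ]
    cases b <;> simp <;> omega

lemma natOfBits_inj : ∀ (bs bs' : List Bool), bs.length = bs'.length →
    natOfBits bs = natOfBits bs' → bs = bs'
  | [], [], _, _ => rfl
  | b :: bs, b' :: bs', hl, he => by
    rw [natOfBits_cons, natOfBits_cons] at he
    simp only [List.length_cons, Nat.succ_inj] at hl
    have hb : b = b' := by cases b <;> cases b' <;> simp_all <;> omega
    subst hb
    have : natOfBits bs = natOfBits bs' := by cases b <;> simp at he <;> omega
    rw [natOfBits_inj bs bs' hl this]

lemma le_lw (μ w : ℕ) (hw : 0 < w) : μ + 1 ≤ (μ + w) / w * w := by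
  have h1 : (μ + w) / w * w + w > μ + w := Nat.lt_div_mul_add hw
  omega

lemma padMsg_length (μ w : ℕ) (hw : 0 < w) (m : List Bool) (hm : m.length ≤ μ) :
    (padMsg μ w m).length = (μ + w) / w * w := by
  have := le_lw μ w hw
  simp [padMsg]; omega

lemma padMsg_get_true (μ w : ℕ) (m : List Bool) :
    (padMsg μ w m)[m.length]? = some true := by
  rw [padMsg, List.append_assoc, List.getElem?_append_right (le_refl _)]
  simp

lemma padMsg_length' (μ w : ℕ) (m : List Bool) :
    (padMsg μ w m).length = m.length + 1 + ((μ + w) / w * w - m.length - 1) := by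
  simp [padMsg]; omega

lemma padMsg_get_false (μ w : ℕ) (m : List Bool) (n : ℕ) (hn : m.length < n)
    (hn2 : n < (padMsg μ w m).length) :
    (padMsg μ w m)[n]? = some false := by
  rw [padMsg_length'] at hn2
  rw [padMsg, List.append_assoc, List.getElem?_append_right (by omega)]
  have : n - m.length = (n - m.length - 1) + 1 := by omega
  rw [List.singleton_append, this, List.getElem?_cons_succ, List.getElem?_replicate]
  rw [if_pos (by omega)]

lemma padMsg_inj (μ w : ℕ) (hw : 0 < w) (m m' : List Bool) (hm : m.length ≤ μ)
    (hm' : m'.length ≤ μ) (h : padMsg μ w m = padMsg μ w m') : m = m' := by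
  have hlen : m.length = m'.length := by
    by_contra hne
    rcases Nat.lt_or_ge m.length m'.length with hlt | hge
    · have h1 := padMsg_get_true μ w m'
      have h2 := padMsg_get_false μ w m m'.length hlt
        (by rw [padMsg_length μ w hw m hm]; have := le_lw μ w hw; omega)
      rw [h] at h2; rw [h1] at h2; simp at h2
    · have hlt : m'.length < m.length := by omega
      have h1 := padMsg_get_true μ w m
      have h2 := padMsg_get_false μ w m' m.length hlt
        (by rw [padMsg_length μ w hw m' hm']; have := le_lw μ w hw; omega)
      rw [← h] at h2; rw [h1] at h2; simp at h2
  have := List.append_inj (by simpa [padMsg, List.append_assoc] using h) hlen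
  exact this.1

lemma chunkAt_lt (w : ℕ) (bs : List Bool) (i : ℕ) : chunkAt w bs i < 2 ^ w := by
  have h := natOfBits_lt ((bs.drop (i * w)).take w)
  have : ((bs.drop (i * w)).take w).length ≤ w := by simp
  calc chunkAt w bs i < 2 ^ ((bs.drop (i * w)).take w).length := h
    _ ≤ 2 ^ w := Nat.pow_le_pow_right (by norm_num) this

lemma chunkAt_succ (w : ℕ) (bs : List Bool) (i : ℕ) :
    chunkAt w bs (i + 1) = chunkAt w (bs.drop w) i := by
  unfold chunkAt
  rw [List.drop_drop]
  ring_nf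

lemma chunks_inj (w : ℕ) (hw : 0 < w) : ∀ (l : ℕ) (a b : List Bool),
    a.length = l * w → b.length = l * w →
    (∀ i < l, chunkAt w a i = chunkAt w b i) → a = b
  | 0, a, b, ha, hb, _ => by
    simp at ha hb
    rw [ha, hb]
  | l + 1, a, b, ha, hb, h => by
    have hwa : w ≤ a.length := by rw [ha]; nlinarith
    have hwb : w ≤ b.length := by rw [hb]; nlinarith
    have h0 : a.take w = b.take w := by
      apply natOfBits_inj _ _ (by simp [hwa, hwb])
      have := h 0 (Nat.succ_pos l)
      simpa [chunkAt] using this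
    have htail : a.drop w = b.drop w := by
      apply chunks_inj w hw l
      · simp [ha]; ring_nf; omega
      · simp [hb]; ring_nf; omega
      · intro i hi
        rw [← chunkAt_succ, ← chunkAt_succ]
        exact h (i + 1) (by omega)
    rw [← List.take_append_drop w a, ← List.take_append_drop w b, h0, htail]

open Polynomial in
lemma polyHash_collision (μ w : ℕ) (hw : 0 < w) (p : ℕ) [Fact p.Prime]
    (hp : 2 ^ w < p) (m m' : List Bool) (hm : m.length ≤ μ) (hm' : m'.length ≤ μ)
    (hne : m ≠ m') :
    (univ.filter fun k : Fin (2 ^ w) => polyHash μ w p k m = polyHash μ w p k m').card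
      ≤ (μ + w - 1) / w := by
  set l := (μ + w) / w with hl
  set a : ℕ → ℕ := fun i => chunkAt w (padMsg μ w m) i with ha
  set b : ℕ → ℕ := fun i => chunkAt w (padMsg μ w m') i with hb
  -- a coefficient where they differ
  have hex : ∃ i₀, i₀ < l ∧ a i₀ ≠ b i₀ := by
    by_contra hcon
    push_neg at hcon
    have : padMsg μ w m = padMsg μ w m' := by
      apply chunks_inj w hw l _ _ (padMsg_length μ w hw m hm) (padMsg_length μ w hw m' hm')
      intro i hi; exact hcon i hi
    exact hne (padMsg_inj μ w hw m m' hm hm' this)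
  obtain ⟨i₀, hi₀l, hi₀⟩ := hex
  have hcastinj : ∀ x y : ℕ, x < 2 ^ w → y < 2 ^ w → ((x : ZMod p) = y) → x = y := by
    intro x y hx hy hxy
    have := congrArg ZMod.val hxy
    rwa [ZMod.val_natCast_of_lt (by omega), ZMod.val_natCast_of_lt (by omega)] at this
  set q : Polynomial (ZMod p) :=
    ∑ i ∈ Finset.range l, C ((a i : ZMod p) - (b i : ZMod p)) * X ^ i with hq
  have hcoeff : q.coeff i₀ = (a i₀ : ZMod p) - (b i₀ : ZMod p) := by
    rw [hq, finset_sum_coeff]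
    simp only [coeff_C_mul, coeff_X_pow]
    rw [Finset.sum_eq_single i₀]
    · simp
    · intro c _ hc; simp [Ne.symm hc]
    · intro h; exact absurd (Finset.mem_range.mpr hi₀l) h
  have hcoeffne : q.coeff i₀ ≠ 0 := by
    rw [hcoeff, sub_ne_zero]
    intro hcon
    exact hi₀ (hcastinj _ _ (chunkAt_lt w _ i₀) (chunkAt_lt w _ i₀) hcon)
  have hqne : q ≠ 0 := fun hcon => hcoeffne (by rw [hcon]; simp)
  have hdeg : q.natDegree ≤ l - 1 := by
    apply natDegree_sum_le_of_forall_le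
    intro i hi
    exact le_trans (natDegree_C_mul_X_pow_le _ _) (by simp at hi; omega)
  have heval : ∀ k : Fin (2 ^ w), polyHash μ w p k m = polyHash μ w p k m' →
      q.IsRoot ((k : ℕ) : ZMod p) := by
    intro k hk
    have : q.eval ((k : ℕ) : ZMod p)
        = polyHash μ w p k m - polyHash μ w p k m' := by
      rw [hq]
      rw [eval_finset_sum]
      simp only [eval_mul, eval_C, eval_pow, eval_X]
      rw [polyHash, polyHash, ← Fin.sum_univ_eq_sum_range
        (fun i => ((a i : ZMod p) - b i) * ((k : ℕ) : ZMod p) ^ i) l]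
      rw [← Finset.sum_sub_distrib]
      congr 1; ext i; ring
    rw [IsRoot, this, hk, sub_self]
  calc (univ.filter fun k : Fin (2 ^ w) =>
        polyHash μ w p k m = polyHash μ w p k m').card
      ≤ q.roots.toFinset.card := by
        refine Finset.card_le_card_of_injOn (fun k => ((k : ℕ) : ZMod p)) ?_ ?_
        · intro k hk
          have hk := Finset.mem_filter.mp (Finset.mem_coe.mp hk)
          refine Finset.mem_coe.mpr ?_
          rw [Multiset.mem_toFinset, mem_roots hqne]
          exact heval k hk.2
        · intro x _ y _ hxy
          have := hcastinj x y (x.isLt) (y.isLt) hxy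
          exact Fin.ext this
    _ ≤ q.roots.card := q.roots.toFinset_card_le
    _ ≤ q.natDegree := q.card_roots'
    _ ≤ l - 1 := hdeg
    _ ≤ (μ + w - 1) / w := by
        have h1 : l - 1 = μ / w := by rw [hl, Nat.add_div_right _ hw]; rfl
        rw [h1]
        exact Nat.div_le_div_right (by omega)

lemma toeplitz_add_x (α β : ℕ) (k : Fin (α + β - 1) → ZMod 2) (x y : Fin α → ZMod 2) :
    toeplitzHash α β k (x + y) = toeplitzHash α β k x + toeplitzHash α β k y := by
  funext i
  simp only [toeplitzHash, Pi.add_apply, ← Finset.sum_add_distrib]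
  congr 1; funext j; ring

def solveK (α β j₀ : ℕ) (x : Fin α → ZMod 2) (c : Fin β → ZMod 2) : ℕ → ZMod 2
  | n =>
    if h : j₀ ≤ n ∧ n < j₀ + β then
      c ⟨β + j₀ - 1 - n, by omega⟩ +
        ∑ j ∈ Finset.univ.filter (fun j : Fin α => (j : ℕ) < j₀),
          x j * (if hlt : n + (j : ℕ) - j₀ < n then solveK α β j₀ x c (n + (j : ℕ) - j₀) else 0)
    else 0
  termination_by n => n
  decreasing_by exact hlt

lemma zmod2_add_self (a : ZMod 2) : a + a = 0 := by
  have : (2 : ZMod 2) = 0 := by decide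
  calc a + a = 2 * a := by ring
    _ = 0 := by rw [this, zero_mul]

lemma toeplitz_surj (α β : ℕ) (hβ : 0 < β) (x : Fin α → ZMod 2) (hx : x ≠ 0)
    (c : Fin β → ZMod 2) : ∃ k, toeplitzHash α β k x = c := by
  -- j₀ : the largest index with x j₀ ≠ 0
  have hex : ∃ j : Fin α, x j ≠ 0 := by
    by_contra hcon; push_neg at hcon
    exact hx (funext fun j => hcon j)
  classical
  obtain ⟨j₀, hj₀ne, hj₀max⟩ :
      ∃ j₀ : Fin α, x j₀ ≠ 0 ∧ ∀ j : Fin α, (j₀ : ℕ) < (j : ℕ) → x j = 0 := by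
    obtain ⟨S, hS⟩ : ∃ S, S = Finset.univ.filter (fun j : Fin α => x j ≠ 0) := ⟨_, rfl⟩
    have hSne : S.Nonempty := by
      obtain ⟨j, hj⟩ := hex; exact ⟨j, by simp [hS, hj]⟩
    obtain ⟨j₀, hj₀S, hmax⟩ := S.exists_max_image (fun j => (j : ℕ)) hSne
    refine ⟨j₀, by simpa [hS] using hj₀S, fun j hj => ?_⟩
    by_contra hne
    have : j ∈ S := by simp [hS, hne]
    exact absurd (hmax j this) (by omega)
  have hzm : ∀ a : ZMod 2, a ≠ 0 → a = 1 := by decide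
  have hx1 : x j₀ = 1 := hzm _ hj₀ne
  refine ⟨fun idx => solveK α β j₀ x c (idx : ℕ), ?_⟩
  funext i
  have hiβ : (i : ℕ) < β := i.isLt
  set n₀ : ℕ := β + (j₀ : ℕ) - (i : ℕ) - 1 with hn₀
  have hn₀ge : (j₀ : ℕ) ≤ n₀ := by omega
  have hn₀lt : n₀ < (j₀ : ℕ) + β := by omega
  -- the value of solveK at the pivot index
  have hpivot : solveK α β j₀ x c n₀ =
      c i + ∑ j ∈ Finset.univ.filter (fun j : Fin α => (j : ℕ) < (j₀ : ℕ)),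
        x j * solveK α β j₀ x c (β + (j : ℕ) - (i : ℕ) - 1) := by
    rw [solveK]
    rw [dif_pos ⟨hn₀ge, hn₀lt⟩]
    congr 1
    · congr 1; apply Fin.ext; simp; omega
    · apply Finset.sum_congr rfl
      intro j hj
      simp only [Finset.mem_filter] at hj
      have hjlt : (j : ℕ) < (j₀ : ℕ) := hj.2
      rw [dif_pos (by omega)]
      congr 2
      omega
  -- split the Toeplitz sum
  have hT : toeplitzHash α β (fun idx => solveK α β j₀ x c (idx : ℕ)) x i
      = solveK α β j₀ x c n₀ +
        ∑ j ∈ Finset.univ.filter (fun j : Fin α => (j : ℕ) < (j₀ : ℕ)),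
          solveK α β j₀ x c (β + (j : ℕ) - (i : ℕ) - 1) * x j := by
    rw [toeplitzHash]
    rw [← Finset.sum_filter_add_sum_filter_not Finset.univ
      (fun j : Fin α => (j : ℕ) ≤ (j₀ : ℕ))]
    have h2 : ∑ j ∈ Finset.univ.filter (fun j : Fin α => ¬ (j : ℕ) ≤ (j₀ : ℕ)),
        solveK α β j₀ x c ((⟨β + (j : ℕ) - (i : ℕ) - 1, by
          have hj := j.isLt; omega⟩ : Fin (α + β - 1)) : ℕ) * x j = 0 := by
      apply Finset.sum_eq_zero
      intro j hj
      simp only [Finset.mem_filter, not_le] at hj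
      rw [hj₀max j hj.2, mul_zero]
    rw [h2, add_zero]
    have hsplit : Finset.univ.filter (fun j : Fin α => (j : ℕ) ≤ (j₀ : ℕ))
        = insert j₀ (Finset.univ.filter (fun j : Fin α => (j : ℕ) < (j₀ : ℕ))) := by
      ext j
      simp only [Finset.mem_filter, Finset.mem_insert, Finset.mem_univ, true_and]
      constructor
      · intro h
        rcases Nat.lt_or_ge (j : ℕ) (j₀ : ℕ) with h' | h'
        · exact Or.inr h'
        · exact Or.inl (Fin.ext (by omega))
      · rintro (rfl | h)
        · exact le_refl _
        · omega
    rw [hsplit, Finset.sum_insert (by simp)]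
    rw [hx1, mul_one]
  rw [hT, hpivot]
  have : ∑ j ∈ Finset.univ.filter (fun j : Fin α => (j : ℕ) < (j₀ : ℕ)),
        solveK α β j₀ x c (β + (j : ℕ) - (i : ℕ) - 1) * x j
      = ∑ j ∈ Finset.univ.filter (fun j : Fin α => (j : ℕ) < (j₀ : ℕ)),
        x j * solveK α β j₀ x c (β + (j : ℕ) - (i : ℕ) - 1) := by
    apply Finset.sum_congr rfl; intros; ring
  rw [this, add_assoc, zmod2_add_self, add_zero]

lemma toeplitz_add_k (α β : ℕ) (k k' : Fin (α + β - 1) → ZMod 2) (x : Fin α → ZMod 2) :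
    toeplitzHash α β (k + k') x = toeplitzHash α β k x + toeplitzHash α β k' x := by
  funext i
  simp only [toeplitzHash, Pi.add_apply, ← Finset.sum_add_distrib]
  congr 1; funext j; ring

lemma fun_add_self {n : ℕ} (v : Fin n → ZMod 2) : v + v = 0 := by
  funext i; exact zmod2_add_self (v i)

lemma toeplitz_fiber (α β : ℕ) (hβ : 0 < β) (x : Fin α → ZMod 2) (hx : x ≠ 0)
    (c : Fin β → ZMod 2) :
    (univ.filter fun k : Fin (α + β - 1) → ZMod 2 => toeplitzHash α β k x = c).card * 2 ^ β
      = 2 ^ (α + β - 1) := by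
  classical
  have hcards : ∀ c c' : Fin β → ZMod 2,
      (univ.filter fun k : Fin (α + β - 1) → ZMod 2 => toeplitzHash α β k x = c).card =
      (univ.filter fun k : Fin (α + β - 1) → ZMod 2 => toeplitzHash α β k x = c').card := by
    intro c c'
    obtain ⟨k₀, hk₀⟩ := toeplitz_surj α β hβ x hx (c + c')
    apply Finset.card_bij' (fun k _ => k + k₀) (fun k _ => k + k₀)
    · intro k hk
      simp only [Finset.mem_filter, Finset.mem_univ, true_and] at hk ⊢
      rw [toeplitz_add_k, hk, hk₀]
      funext i
      simp only [Pi.add_apply]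
      have := zmod2_add_self (c i)
      have := zmod2_add_self (c' i)
      -- c + (c + c') = c'
      calc c i + (c i + c' i) = (c i + c i) + c' i := by ring
        _ = c' i := by rw [zmod2_add_self, zero_add]
    · intro k hk
      simp only [Finset.mem_filter, Finset.mem_univ, true_and] at hk ⊢
      rw [toeplitz_add_k, hk, hk₀]
      funext i
      simp only [Pi.add_apply]
      calc c' i + (c i + c' i) = (c' i + c' i) + c i := by ring
        _ = c i := by rw [zmod2_add_self, zero_add]
    · intro k _
      rw [add_assoc, fun_add_self, add_zero]
    · intro k _
      rw [add_assoc, fun_add_self, add_zero]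
  have hsum : ∑ c' : Fin β → ZMod 2,
      (univ.filter fun k : Fin (α + β - 1) → ZMod 2 => toeplitzHash α β k x = c').card
      = 2 ^ (α + β - 1) := by
    rw [← Finset.card_eq_sum_card_fiberwise
      (fun (k : Fin (α + β - 1) → ZMod 2) _ => Finset.mem_univ (toeplitzHash α β k x))]
    simp [Fintype.card_fun]
  have hconst : ∑ c' : Fin β → ZMod 2,
      (univ.filter fun k : Fin (α + β - 1) → ZMod 2 => toeplitzHash α β k x = c').card
      = ∑ _c' : Fin β → ZMod 2,
      (univ.filter fun k : Fin (α + β - 1) → ZMod 2 => toeplitzHash α β k x = c).card :=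
    Finset.sum_congr rfl fun c' _ => hcards c' c
  rw [hconst, Finset.sum_const, smul_eq_mul] at hsum
  rw [← hsum]
  simp [Fintype.card_fun, mul_comm]

lemma bits_det : ∀ (s n n' : ℕ), n < 2 ^ s → n' < 2 ^ s →
    (∀ i < s, n / 2 ^ i % 2 = n' / 2 ^ i % 2) → n = n'
  | 0, n, n', hn, hn', _ => by simp at hn hn'; omega
  | s + 1, n, n', hn, hn', h => by
    have h0 := h 0 (Nat.succ_pos s)
    simp only [pow_zero, Nat.div_one] at h0
    have htail : n / 2 = n' / 2 := by
      apply bits_det s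
      · exact Nat.div_lt_of_lt_mul (by rw [← pow_succ']; exact hn)
      · exact Nat.div_lt_of_lt_mul (by rw [← pow_succ']; exact hn')
      · intro i hi
        have e1 : n / 2 / 2 ^ i = n / 2 ^ (i + 1) := by
          rw [Nat.div_div_eq_div_mul, ← pow_succ']
        have e2 : n' / 2 / 2 ^ i = n' / 2 ^ (i + 1) := by
          rw [Nat.div_div_eq_div_mul, ← pow_succ']
        rw [e1, e2]
        exact h (i + 1) (by omega)
    omega

lemma zmod2_cast_inj (a b : ℕ) (ha : a < 2) (hb : b < 2) (h : (a : ZMod 2) = b) : a = b := by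
  have := congrArg ZMod.val h
  rwa [ZMod.val_natCast_of_lt ha, ZMod.val_natCast_of_lt hb] at this

lemma concatPoly_eq_iff (μ w p lam : ℕ) [NeZero p] (hp' : p < 2 ^ (w + 1))
    (ks : Fin lam → Fin (2 ^ w)) (m m' : List Bool) :
    concatPoly μ w p lam ks m = concatPoly μ w p lam ks m' ↔
      ∀ l : Fin lam, polyHash μ w p (ks l) m = polyHash μ w p (ks l) m' := by
  constructor
  · intro h l
    set n := ZMod.val (polyHash μ w p (ks l) m) with hn
    set n' := ZMod.val (polyHash μ w p (ks l) m') with hn'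
    have hnlt : n < 2 ^ (w + 1) := lt_trans (ZMod.val_lt _) hp'
    have hn'lt : n' < 2 ^ (w + 1) := lt_trans (ZMod.val_lt _) hp'
    have hnn' : n = n' := by
      apply bits_det (w + 1) n n' hnlt hn'lt
      intro i hi
      have hidx : (l : ℕ) * (w + 1) + i < lam * (w + 1) := by
        have := l.isLt
        calc (l : ℕ) * (w + 1) + i < (l : ℕ) * (w + 1) + (w + 1) := by omega
          _ = ((l : ℕ) + 1) * (w + 1) := by ring
          _ ≤ lam * (w + 1) := Nat.mul_le_mul_right _ (by omega)
      have := congrFun h ⟨(l : ℕ) * (w + 1) + i, hidx⟩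
      simp only [concatPoly, bitsOf] at this
      have hdiv : ((l : ℕ) * (w + 1) + i) / (w + 1) = (l : ℕ) := by
        rw [Nat.add_comm, Nat.add_mul_div_right _ _ (Nat.succ_pos w), Nat.div_eq_of_lt hi, Nat.zero_add]
      have hmod : ((l : ℕ) * (w + 1) + i) % (w + 1) = i := by
        rw [Nat.add_comm, Nat.add_mul_mod_self_right, Nat.mod_eq_of_lt hi]
      simp only [hdiv, hmod, Fin.eta] at this
      exact zmod2_cast_inj _ _ (Nat.mod_lt _ (by norm_num)) (Nat.mod_lt _ (by norm_num)) this
    exact ZMod.val_injective p hnn'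
  · intro h
    funext idx
    simp only [concatPoly]
    rw [h]

lemma concat_collision_card (μ w lam : ℕ) (hw : 0 < w) (p : ℕ) [Fact p.Prime] [NeZero p]
    (hp : 2 ^ w < p) (hp' : p < 2 ^ (w + 1)) (m m' : List Bool) (hm : m.length ≤ μ)
    (hm' : m'.length ≤ μ) (hne : m ≠ m') :
    (univ.filter fun ks : Fin lam → Fin (2 ^ w) =>
        concatPoly μ w p lam ks m = concatPoly μ w p lam ks m').card
      ≤ ((μ + w - 1) / w) ^ lam := by
  classical
  have hset : (univ.filter fun ks : Fin lam → Fin (2 ^ w) =>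
        concatPoly μ w p lam ks m = concatPoly μ w p lam ks m')
      = Fintype.piFinset (fun _l : Fin lam =>
          univ.filter (fun k : Fin (2 ^ w) => polyHash μ w p k m = polyHash μ w p k m')) := by
    ext ks
    simp only [Finset.mem_filter, Finset.mem_univ, true_and, Fintype.mem_piFinset]
    rw [concatPoly_eq_iff μ w p lam hp']
  rw [hset, Fintype.card_piFinset]
  calc ∏ _l : Fin lam,
        (univ.filter (fun k : Fin (2 ^ w) => polyHash μ w p k m = polyHash μ w p k m')).card
      ≤ ∏ _l : Fin lam, ((μ + w - 1) / w) := by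
        apply Finset.prod_le_prod'
        intro l _
        exact polyHash_collision μ w hw p hp m m' hm hm' hne
    _ = ((μ + w - 1) / w) ^ lam := by
        rw [Finset.prod_const, Finset.card_univ, Fintype.card_fin]

lemma card_filter_prod3 {A B C : Type*} [Fintype A] [Fintype B] [Fintype C]
    [DecidableEq A] [DecidableEq B] [DecidableEq C]
    (P : A × B × C → Prop) [DecidablePred P] :
    (univ.filter P).card
      = ∑ a : A, ∑ b : B, (univ.filter fun c : C => P (a, b, c)).card := by
  rw [Finset.card_filter]
  rw [← Finset.univ_product_univ, Finset.sum_product]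
  apply Finset.sum_congr rfl
  intro a _
  rw [← Finset.univ_product_univ, Finset.sum_product]
  apply Finset.sum_congr rfl
  intro b _
  rw [Finset.card_filter]

lemma otp_count {n : ℕ} (a t : Fin n → ZMod 2) :
    (univ.filter fun r : Fin n → ZMod 2 => a + r = t).card = 1 := by
  have : (univ.filter fun r : Fin n → ZMod 2 => a + r = t) = {a + t} := by
    ext r
    simp only [Finset.mem_filter, Finset.mem_univ, true_and, Finset.mem_singleton]
    constructor
    · intro h
      rw [← h, ← add_assoc, fun_add_self, zero_add]
    · rintro rfl
      rw [← add_assoc, fun_add_self, zero_add]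
  rw [this, Finset.card_singleton]

lemma pair_count {n : ℕ} (a b t t' : Fin n → ZMod 2) :
    (univ.filter fun r : Fin n → ZMod 2 => a + r = t ∧ b + r = t').card
      = if a + b = t + t' then 1 else 0 := by
  split
  case isTrue h =>
    have : (univ.filter fun r : Fin n → ZMod 2 => a + r = t ∧ b + r = t') = {a + t} := by
      ext r
      simp only [Finset.mem_filter, Finset.mem_univ, true_and, Finset.mem_singleton]
      constructor
      · rintro ⟨h1, _⟩
        rw [← h1, ← add_assoc, fun_add_self, zero_add]
      · rintro rfl
        constructor
        · rw [← add_assoc, fun_add_self, zero_add]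
        · -- b + (a + t) = t'
          have : b + (a + t) = (a + b) + t := by abel
          rw [this, h]
          have : t + t' + t = (t + t) + t' := by abel
          rw [this, fun_add_self, zero_add]
    rw [this, Finset.card_singleton]
  case isFalse h =>
    rw [Finset.card_eq_zero]
    ext r
    simp only [Finset.mem_filter, Finset.mem_univ, true_and, Finset.notMem_empty,
      iff_false, not_and]
    intro h1 h2
    apply h
    rw [← h1, ← h2]
    have : a + r + (b + r) = (a + b) + (r + r) := by abel
    rw [this, fun_add_self, add_zero]

/-- The full lightweight-authentication hash: λ-fold polynomial AU₂ hashing, then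
Toeplitz XU₂ hashing onto `{0,1}^τ`, then a one-time pad. It is an ε-ASU₂ family with
`ε = 2^{-τ} + ⌈μ/w⌉^λ·2^{-λw}`; the recycled (non-OTP) key has
`2λw + λ + τ - 1` bits and the fresh OTP key has τ bits. -/
theorem lightweight_asu2 (μ w lam τ : ℕ) (hμ : 0 < μ) (hw : 0 < w) (hlam : 0 < lam)
    (hτ : 0 < τ) (p : ℕ) [Fact p.Prime] [NeZero p]
    (hp : 2 ^ w < p) (hp' : p < 2 ^ (w + 1)) :
    (∀ (m : {m : List Bool // m.length ≤ μ}) (t : Fin τ → ZMod 2),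
      ((univ.filter
          fun key : (Fin lam → Fin (2 ^ w)) ×
              (Fin (lam * (w + 1) + τ - 1) → ZMod 2) × (Fin τ → ZMod 2) =>
            toeplitzHash (lam * (w + 1)) τ key.2.1 (concatPoly μ w p lam key.1 m.1)
              + key.2.2 = t).card : ℝ)
        / Fintype.card ((Fin lam → Fin (2 ^ w)) ×
            (Fin (lam * (w + 1) + τ - 1) → ZMod 2) × (Fin τ → ZMod 2))
        = 1 / 2 ^ τ) ∧
    (∀ m m' : {m : List Bool // m.length ≤ μ}, m ≠ m' → ∀ t t' : Fin τ → ZMod 2,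
      ((univ.filter
          fun key : (Fin lam → Fin (2 ^ w)) ×
              (Fin (lam * (w + 1) + τ - 1) → ZMod 2) × (Fin τ → ZMod 2) =>
            toeplitzHash (lam * (w + 1)) τ key.2.1 (concatPoly μ w p lam key.1 m.1)
              + key.2.2 = t ∧
            toeplitzHash (lam * (w + 1)) τ key.2.1 (concatPoly μ w p lam key.1 m'.1)
              + key.2.2 = t').card : ℝ)
        / Fintype.card ((Fin lam → Fin (2 ^ w)) ×
            (Fin (lam * (w + 1) + τ - 1) → ZMod 2) × (Fin τ → ZMod 2))
        ≤ (1 / 2 ^ τ + (((μ + w - 1) / w : ℕ) : ℝ) ^ lam / 2 ^ (lam * w)) / 2 ^ τ) ∧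
    lam * w + (lam * (w + 1) + τ - 1) = 2 * lam * w + lam + τ - 1 := by
  classical
  set K : ℕ := lam * (w + 1) + τ - 1 with hK
  have hcardtot : (Fintype.card ((Fin lam → Fin (2 ^ w)) ×
      (Fin K → ZMod 2) × (Fin τ → ZMod 2)) : ℝ)
      = ((2 : ℝ) ^ w) ^ lam * 2 ^ K * 2 ^ τ := by
    simp only [Fintype.card_prod, Fintype.card_fun, Fintype.card_fin, ZMod.card]
    push_cast
    ring
  have hKcard : Fintype.card (Fin K → ZMod 2) = 2 ^ K := by
    simp [Fintype.card_fun, ZMod.card]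
  have hkscard : Fintype.card (Fin lam → Fin (2 ^ w)) = (2 ^ w) ^ lam := by
    simp [Fintype.card_fun]
  refine ⟨?part1, ?part2, ?part3⟩
  case part3 =>
    have h1 : lam * (w + 1) = lam * w + lam := by ring
    have h2 : 2 * lam * w = lam * w + lam * w := by ring
    omega
  case part1 =>
    intro m t
    rw [card_filter_prod3]
    have hsum : ∑ ks : Fin lam → Fin (2 ^ w), ∑ k : Fin K → ZMod 2,
        (univ.filter fun r : Fin τ → ZMod 2 =>
          toeplitzHash (lam * (w + 1)) τ k (concatPoly μ w p lam ks m.1) + r = t).card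
        = (2 ^ w) ^ lam * 2 ^ K := by
      have : ∀ (ks : Fin lam → Fin (2 ^ w)) (k : Fin K → ZMod 2),
          (univ.filter fun r : Fin τ → ZMod 2 =>
            toeplitzHash (lam * (w + 1)) τ k (concatPoly μ w p lam ks m.1) + r = t).card
          = 1 := fun ks k => otp_count _ t
      simp only [this, Finset.sum_const, Finset.card_univ, smul_eq_mul, mul_one,
        hKcard, hkscard]
    rw [hsum, hcardtot]
    have h1 : ((2 : ℝ) ^ w) ^ lam > 0 := by positivity
    have h2 : (2 : ℝ) ^ K > 0 := by positivity
    have h3 : (2 : ℝ) ^ τ > 0 := by positivity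
    push_cast
    field_simp
  case part2 =>
    intro m m' hmm t t'
    have hmsg : m.1 ≠ m'.1 := fun h => hmm (Subtype.ext h)
    set s2 : Fin τ → ZMod 2 := t + t' with hs2
    set D : (Fin lam → Fin (2 ^ w)) → Fin (lam * (w + 1)) → ZMod 2 :=
      fun ks => concatPoly μ w p lam ks m.1 + concatPoly μ w p lam ks m'.1 with hD
    set F : (Fin lam → Fin (2 ^ w)) → ℕ :=
      fun ks => (univ.filter fun k : Fin (lam * (w + 1) + τ - 1) → ZMod 2 =>
        toeplitzHash (lam * (w + 1)) τ k (D ks) = s2).card with hF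
    have hnum : (univ.filter
          (fun key : (Fin lam → Fin (2 ^ w)) ×
              (Fin (lam * (w + 1) + τ - 1) → ZMod 2) × (Fin τ → ZMod 2) =>
            toeplitzHash (lam * (w + 1)) τ key.2.1 (concatPoly μ w p lam key.1 m.1)
              + key.2.2 = t ∧
            toeplitzHash (lam * (w + 1)) τ key.2.1 (concatPoly μ w p lam key.1 m'.1)
              + key.2.2 = t')).card = ∑ ks : Fin lam → Fin (2 ^ w), F ks := by
      rw [card_filter_prod3]
      apply Finset.sum_congr rfl
      intro ks _
      have hinner : ∀ k : Fin (lam * (w + 1) + τ - 1) → ZMod 2,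
          (univ.filter fun r : Fin τ → ZMod 2 =>
            toeplitzHash (lam * (w + 1)) τ k (concatPoly μ w p lam ks m.1) + r = t ∧
            toeplitzHash (lam * (w + 1)) τ k (concatPoly μ w p lam ks m'.1) + r = t').card
          = if toeplitzHash (lam * (w + 1)) τ k (D ks) = s2 then 1 else 0 := by
        intro k
        rw [pair_count, hD, toeplitz_add_x, hs2]
      dsimp only
      simp only [hinner]
      rw [hF]
      dsimp only
      rw [Finset.card_filter]
    rw [hnum]
    -- the collision-count bound, at the level of naturals
    set A : ℕ := (univ.filter fun ks : Fin lam → Fin (2 ^ w) =>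
      concatPoly μ w p lam ks m.1 = concatPoly μ w p lam ks m'.1).card with hA
    have hAbound : A ≤ ((μ + w - 1) / w) ^ lam :=
      concat_collision_card μ w lam hw p hp hp' m.1 m'.1 m.2 m'.2 hmsg
    have hbound : ∀ ks : Fin lam → Fin (2 ^ w), F ks * 2 ^ τ ≤
        if concatPoly μ w p lam ks m.1 = concatPoly μ w p lam ks m'.1
        then 2 ^ K * 2 ^ τ else 2 ^ K := by
      intro ks
      split
      case isTrue h =>
        apply Nat.mul_le_mul_right
        calc F ks ≤ Fintype.card (Fin (lam * (w + 1) + τ - 1) → ZMod 2) := by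
              rw [← Finset.card_univ]; exact Finset.card_filter_le _ _
          _ = 2 ^ K := hKcard
      case isFalse h =>
        have hDne : D ks ≠ 0 := by
          intro hcon
          apply h
          have := congrArg (fun v => v + concatPoly μ w p lam ks m'.1) hcon
          simpa [hD, add_assoc, fun_add_self] using this
        have := toeplitz_fiber (lam * (w + 1)) τ hτ (D ks) hDne s2
        rw [hF]
        exact le_of_eq this
    have hnat : (∑ ks : Fin lam → Fin (2 ^ w), F ks) * 2 ^ τ
        ≤ ((μ + w - 1) / w) ^ lam * (2 ^ K * 2 ^ τ) + (2 ^ w) ^ lam * 2 ^ K := by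
      rw [Finset.sum_mul]
      calc ∑ ks : Fin lam → Fin (2 ^ w), F ks * 2 ^ τ
          ≤ ∑ ks : Fin lam → Fin (2 ^ w),
            (if concatPoly μ w p lam ks m.1 = concatPoly μ w p lam ks m'.1
             then 2 ^ K * 2 ^ τ else 2 ^ K) := Finset.sum_le_sum fun ks _ => hbound ks
        _ = A * (2 ^ K * 2 ^ τ) +
            (univ.filter fun ks : Fin lam → Fin (2 ^ w) =>
              ¬ concatPoly μ w p lam ks m.1 = concatPoly μ w p lam ks m'.1).card * 2 ^ K := by
            rw [Finset.sum_ite, Finset.sum_const, Finset.sum_const, smul_eq_mul, smul_eq_mul,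
              hA]
        _ ≤ ((μ + w - 1) / w) ^ lam * (2 ^ K * 2 ^ τ) + (2 ^ w) ^ lam * 2 ^ K := by
            apply Nat.add_le_add
            · exact Nat.mul_le_mul_right _ hAbound
            · apply Nat.mul_le_mul_right
              calc (univ.filter fun ks : Fin lam → Fin (2 ^ w) =>
                    ¬ concatPoly μ w p lam ks m.1 = concatPoly μ w p lam ks m'.1).card
                  ≤ Fintype.card (Fin lam → Fin (2 ^ w)) := by
                    rw [← Finset.card_univ]; exact Finset.card_filter_le _ _
                _ = (2 ^ w) ^ lam := hkscard
    -- now pass to the reals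
    have hT : (0 : ℝ) < ((2 : ℝ) ^ w) ^ lam * 2 ^ K * 2 ^ τ := by positivity
    have h3 : (0 : ℝ) < (2 : ℝ) ^ τ := by positivity
    have hZ : ((2 : ℝ) ^ w) ^ lam = 2 ^ (lam * w) := by
      rw [← pow_mul, Nat.mul_comm]
    have key : ((∑ ks : Fin lam → Fin (2 ^ w), F ks : ℕ) : ℝ) * 2 ^ τ
        ≤ (((μ + w - 1) / w : ℕ) : ℝ) ^ lam * (2 ^ K * 2 ^ τ) + 2 ^ (lam * w) * 2 ^ K := by
      have hc2 := (Nat.cast_le (α := ℝ)).mpr hnat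
      push_cast at hc2
      push_cast
      rw [← hZ]
      linarith [hc2]
    have hden : (Fintype.card ((Fin lam → Fin (2 ^ w)) ×
        (Fin (lam * (w + 1) + τ - 1) → ZMod 2) × (Fin τ → ZMod 2)) : ℝ)
        = ((2 : ℝ) ^ w) ^ lam * 2 ^ K * 2 ^ τ := hcardtot
    rw [hden, div_le_iff₀ hT, ← mul_le_mul_iff_of_pos_right h3]
    calc ((∑ ks : Fin lam → Fin (2 ^ w), F ks : ℕ) : ℝ) * 2 ^ τ
        ≤ (((μ + w - 1) / w : ℕ) : ℝ) ^ lam * (2 ^ K * 2 ^ τ) + 2 ^ (lam * w) * 2 ^ K := key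
      _ = (1 / 2 ^ τ + (((μ + w - 1) / w : ℕ) : ℝ) ^ lam / 2 ^ (lam * w)) / 2 ^ τ *
          (((2 : ℝ) ^ w) ^ lam * 2 ^ K * 2 ^ τ) * 2 ^ τ := by
          rw [hZ]
          field_simp
          ring
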